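/- arXiv:2305.08168 — 4 statements merged into one kernel-verified Lean document; each statement's English description precedes it below -/
import Mathlib

section
/- The restricted wreath product ℤ ≀ ℤ is an ICC group: every nontrivial conjugacy class is infinite. -/
/-- The shift automorphism of `⊕_{i∈ℤ} ℤ` by `t`. -/
def wreathShift (t : ℤ) : (ℤ →₀ ℤ) ≃+ (ℤ →₀ ℤ) :=
  Finsupp.domCongr (Equiv.addRight t)

/-- The action of `ℤ` on `⊕_{i∈ℤ} ℤ` by shifting coordinates. -/
noncomputable def wreathPhi : Multiplicative ℤ →* MulAut (Multiplicative (ℤ →₀ ℤ)) :=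
  MonoidHom.mk' (fun t => AddEquiv.toMultiplicative (wreathShift t.toAdd))
    (by
      intro a b
      have key : wreathShift ((a * b).toAdd)
          = (wreathShift b.toAdd).trans (wreathShift a.toAdd) := by
        apply AddEquiv.ext; intro l
        apply Finsupp.ext; intro i
        simp [wreathShift, Finsupp.domCongr, Finsupp.equivMapDomain_apply, Equiv.Perm.mul_def,
          Equiv.symm_trans_apply, sub_sub, add_comm]
        congr 1
        ring
      apply MulEquiv.ext; intro f
      show AddEquiv.toMultiplicative (wreathShift ((a * b).toAdd)) f = _
      rw [key]
      rfl)

/-- The restricted wreath product `ℤ ≀ ℤ = (⊕_{i∈ℤ} ℤ) ⋊ ℤ`. -/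
abbrev ZwrZ := SemidirectProduct (Multiplicative (ℤ →₀ ℤ)) (Multiplicative ℤ) wreathPhi

/-!
Write `g = (f, t)` with `f ∈ ⊕_{i∈ℤ} ℤ` and `t ∈ ℤ`. If `f ≠ 0`, conjugating `g` by the powers of the
generator of the top `ℤ` yields base components that are the translates of `f`, and distinct
translates of a nonzero finitely supported function differ. If `f = 0`, then `t ≠ 0` and conjugating
by the basis vector `δₙ` of the base gives the base component `δₙ - δₙ₊ₜ`, distinct for distinct `n`.
-/

open Function SemidirectProduct

theorem infinite_range_conj_of_injective {G ι : Type*} [Group G] [Infinite ι] {g : G}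
    (k : ι → G) (hk : Injective fun i => k i * g * (k i)⁻¹) :
    (Set.range fun h : G => h * g * h⁻¹).Infinite :=
  Set.infinite_of_injective_forall_mem hk fun i => ⟨k i, rfl⟩

namespace SemidirectProduct

variable {N G : Type*} [Group N] [Group G] {φ : G →* MulAut N}

theorem inl_mul_mul_inv_left (n : N) (x : N ⋊[φ] G) :
    (inl n * x * (inl n)⁻¹).left = n * x.left * (φ x.right n)⁻¹ := by
  simp [mul_left, inv_left]

theorem inr_mul_mul_inv_left (g : G) (x : N ⋊[φ] G) :
    (inr g * x * (inr g)⁻¹).left = φ g x.left := by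
  simp [mul_left, inv_left]

end SemidirectProduct

theorem wreathShift_apply (t : ℤ) (f : ℤ →₀ ℤ) (i : ℤ) : wreathShift t f i = f (i - t) := by
  simp [wreathShift, sub_eq_add_neg]

theorem wreathShift_single (t i a : ℤ) :
    wreathShift t (Finsupp.single i a) = Finsupp.single (i + t) a := by
  simp [wreathShift]

theorem wreathPhi_apply (t : Multiplicative ℤ) (f : Multiplicative (ℤ →₀ ℤ)) :
    wreathPhi t f = Multiplicative.ofAdd (wreathShift t.toAdd f.toAdd) := rfl

-- Compare the shifts at the image of the top of the support of `f`.
theorem wreathShift_injective_of_ne_zero {f : ℤ →₀ ℤ} (hf : f ≠ 0) :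
    Injective fun t => wreathShift t f := by
  have hne : f.support.Nonempty := Finsupp.support_nonempty_iff.mpr hf
  set M := f.support.max' hne
  have hM : f M ≠ 0 := Finsupp.mem_support_iff.mp (f.support.max'_mem hne)
  have le_of_eq : ∀ a b : ℤ, wreathShift a f = wreathShift b f → a ≤ b := by
    intro a b hab
    have hval := congrArg (fun x : ℤ →₀ ℤ => x (M + a)) hab
    simp only [wreathShift_apply, add_sub_cancel_right] at hval
    have hmem : M + a - b ∈ f.support := Finsupp.mem_support_iff.mpr (hval ▸ hM)
    have := f.support.le_max' _ hmem
    omega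
  exact fun a b hab => le_antisymm (le_of_eq a b hab) (le_of_eq b a hab.symm)

theorem single_sub_single_add_injective {t : ℤ} (ht : t ≠ 0) :
    Injective fun n : ℤ => Finsupp.single n (1 : ℤ) - Finsupp.single (n + t) 1 := by
  intro n m hnm
  have hval := congrArg (fun x : ℤ →₀ ℤ => x n) hnm
  simp only [Finsupp.coe_sub, Pi.sub_apply, Finsupp.single_apply] at hval
  split_ifs at hval <;> omega

/-- The restricted wreath product `ℤ ≀ ℤ` is an ICC group: every nontrivial conjugacy
class is infinite. -/
theorem stmt_10 :
    ∀ g : ZwrZ, g ≠ 1 → (Set.range fun h : ZwrZ => h * g * h⁻¹).Infinite := by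
  intro g hg
  by_cases hf : g.left = 1
  · have ht : g.right.toAdd ≠ 0 := fun ht => hg (SemidirectProduct.ext hf ht)
    refine infinite_range_conj_of_injective
      (fun n : ℤ => inl (Multiplicative.ofAdd (Finsupp.single n 1))) ?_
    refine Injective.of_comp (f := fun x : ZwrZ => x.left.toAdd) ?_
    convert single_sub_single_add_injective ht using 2 with n
    simp only [comp_apply, inl_mul_mul_inv_left, hf, mul_one, wreathPhi_apply, toAdd_mul,
      toAdd_inv, toAdd_ofAdd, wreathShift_single, sub_eq_add_neg]
  · refine infinite_range_conj_of_injective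
      (fun s : ℤ => inr (Multiplicative.ofAdd s)) ?_
    refine Injective.of_comp (f := fun x : ZwrZ => x.left.toAdd) ?_
    convert wreathShift_injective_of_ne_zero (f := g.left.toAdd) hf using 2 with s
    simp only [comp_apply, inr_mul_mul_inv_left, wreathPhi_apply, toAdd_ofAdd]
end

section
/- The group of finitely supported permutations of ℕ (the finitary symmetric group S_∞) is an ICC group: every nontrivial conjugacy class is infinite. -/
/-- The finitary symmetric group `S_∞`: permutations of `ℕ` moving only finitely many points. -/
def finitarySymmetricGroup : Subgroup (Equiv.Perm ℕ) where
  carrier := {σ : Equiv.Perm ℕ | {x : ℕ | σ x ≠ x}.Finite}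
  one_mem' := by simp
  mul_mem' := by
    intro a b ha hb
    apply (ha.union hb).subset
    intro x hx
    simp only [Set.mem_setOf_eq, Set.mem_union]
    by_contra h
    push_neg at h
    exact hx (by simp [Equiv.Perm.mul_apply, h.1, h.2])
  inv_mem' := by
    intro a ha
    apply ha.subset
    intro x hx
    simp only [Set.mem_setOf_eq] at hx ⊢
    intro h
    apply hx
    conv_lhs => rw [← h]
    simp

/-!
If `g` moves `a`, then conjugating `g` by the transposition `(a n)`, for `n` a fixed
point of `g`, gives a permutation sending `n` to `g a`, whereas for any other fixed point `m` the
conjugate by `(a m)` fixes `n`. So these conjugates are pairwise distinct, and an element of `S_∞`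
has infinitely many fixed points.
-/

namespace Equiv.Perm

variable {α : Type*}

theorem ne_of_mem_fixedPoints_of_apply_ne {σ : Perm α} {a n : α} (ha : σ a ≠ a)
    (hn : n ∈ Function.fixedPoints σ) : n ≠ a ∧ n ≠ σ a := by
  refine ⟨fun h => ha (h ▸ hn), fun h => ha (σ.injective ?_)⟩
  exact h ▸ hn

theorem injOn_swap_conj_fixedPoints [DecidableEq α] {σ : Perm α} {a : α} (ha : σ a ≠ a) :
    Set.InjOn (fun n => swap a n * σ * swap a n) (Function.fixedPoints σ) := by
  intro n hn m hm hconj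
  by_contra hnm
  obtain ⟨hna, hnσa⟩ := ne_of_mem_fixedPoints_of_apply_ne ha hn
  have hleft : (swap a n * σ * swap a n) n = σ a := by
    simp [swap_apply_of_ne_of_ne ha hnσa.symm]
  have hright : (swap a m * σ * swap a m) n = n := by
    simp [swap_apply_of_ne_of_ne hna hnm, hn.eq]
  exact hnσa (hright ▸ hleft ▸ congrFun (congrArg DFunLike.coe hconj) n).symm

end Equiv.Perm

theorem swap_mem_finitarySymmetricGroup (a n : ℕ) :
    Equiv.swap a n ∈ finitarySymmetricGroup := by
  refine ((Set.finite_singleton n).insert a).subset fun x hx => ?_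
  by_contra h
  simp only [Set.mem_insert_iff, Set.mem_singleton_iff, not_or] at h
  exact hx (Equiv.swap_apply_of_ne_of_ne h.1 h.2)

theorem infinite_fixedPoints_of_mem_finitarySymmetricGroup {σ : Equiv.Perm ℕ}
    (hσ : σ ∈ finitarySymmetricGroup) : (Function.fixedPoints σ).Infinite :=
  hσ.infinite_compl.mono fun _ hx => not_not.mp hx

/-- The finitary symmetric group `S_∞` on `ℕ` is an ICC group: every nontrivial
conjugacy class is infinite. -/
theorem stmt_11 :
    ∀ g : finitarySymmetricGroup, g ≠ 1 →
      (Set.range fun h : finitarySymmetricGroup => h * g * h⁻¹).Infinite := by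
  intro g hg
  obtain ⟨a, ha⟩ : ∃ a, (g : Equiv.Perm ℕ) a ≠ a := by
    by_contra! h
    exact hg (Subtype.ext (Equiv.ext h))
  let transposition (n : ℕ) : finitarySymmetricGroup :=
    ⟨Equiv.swap a n, swap_mem_finitarySymmetricGroup a n⟩
  let conj (n : ℕ) := transposition n * g * (transposition n)⁻¹
  have hinj : Set.InjOn conj (Function.fixedPoints (g : Equiv.Perm ℕ)) := fun n hn m hm h =>
    Equiv.Perm.injOn_swap_conj_fixedPoints ha hn hm
      (by simpa [conj, transposition, Equiv.swap_inv] using congrArg Subtype.val h)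
  refine ((infinite_fixedPoints_of_mem_finitarySymmetricGroup g.2).image hinj).mono ?_
  rintro _ ⟨n, -, rfl⟩
  exact ⟨transposition n, rfl⟩
end

section
/- Let E be an equivalence relation on (1,∞) such that whenever r E s and u > 0, also (1+(r−1)/u²) E (1+(s−1)/u²). Then the set G = {((r−1)/(s−1))^{1/2} : r, s ∈ (1,∞), r E s} is a subgroup of the multiplicative group of positive reals. -/
def sqrtRatioSet (E : ℝ → ℝ → Prop) : Set ℝ :=
  {t | ∃ r s : ℝ, 1 < r ∧ 1 < s ∧ E r s ∧ t = Real.sqrt ((r - 1) / (s - 1))}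

section

variable {E : ℝ → ℝ → Prop}

theorem sqrtRatioSet_subset_Ioi : sqrtRatioSet E ⊆ Set.Ioi 0 := by
  rintro t ⟨r, s, hr, hs, -, rfl⟩
  exact Real.sqrt_pos.2 (div_pos (by linarith) (by linarith))

theorem one_mem_sqrtRatioSet (hrefl : ∀ r, 1 < r → E r r) : (1 : ℝ) ∈ sqrtRatioSet E :=
  ⟨2, 2, one_lt_two, one_lt_two, hrefl 2 one_lt_two, by norm_num⟩

theorem inv_mem_sqrtRatioSet (hsymm : ∀ r s, 1 < r → 1 < s → E r s → E s r) {x : ℝ}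
    (hx : x ∈ sqrtRatioSet E) : x⁻¹ ∈ sqrtRatioSet E := by
  obtain ⟨r, s, hr, hs, hE, rfl⟩ := hx
  exact ⟨s, r, hs, hr, hsymm r s hr hs hE, by rw [← Real.sqrt_inv, inv_div]⟩

/-- Scaling by `u = √((s-1)/(t-1))` moves the right-hand point `s` to any prescribed `t`. -/
theorem rel_scale_to
    (hscale : ∀ r s, 1 < r → 1 < s → ∀ u : ℝ, 0 < u →
      E r s → E (1 + (r - 1) / u ^ 2) (1 + (s - 1) / u ^ 2))
    {r s t : ℝ} (hr : 1 < r) (hs : 1 < s) (ht : 1 < t) (h : E r s) :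
    E (1 + (r - 1) * (t - 1) / (s - 1)) t := by
  have hst : 0 < (s - 1) / (t - 1) := div_pos (by linarith) (by linarith)
  have hu2 : Real.sqrt ((s - 1) / (t - 1)) ^ 2 = (s - 1) / (t - 1) := Real.sq_sqrt hst.le
  have := hscale r s hr hs _ (Real.sqrt_pos.2 hst) h
  rw [hu2] at this
  convert this using 2 <;> field_simp [show s - 1 ≠ 0 by linarith, show t - 1 ≠ 0 by linarith]
  ring

theorem mul_mem_sqrtRatioSet
    (htrans : ∀ r s u, 1 < r → 1 < s → 1 < u → E r s → E s u → E r u)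
    (hscale : ∀ r s, 1 < r → 1 < s → ∀ u : ℝ, 0 < u →
      E r s → E (1 + (r - 1) / u ^ 2) (1 + (s - 1) / u ^ 2))
    {x y : ℝ} (hx : x ∈ sqrtRatioSet E) (hy : y ∈ sqrtRatioSet E) : x * y ∈ sqrtRatioSet E := by
  obtain ⟨r, s, hr, hs, hE, rfl⟩ := hx
  obtain ⟨r', s', hr', hs', hE', rfl⟩ := hy
  have hr'' : 1 < 1 + (r - 1) * (r' - 1) / (s - 1) := by
    have : 0 < (r - 1) * (r' - 1) / (s - 1) :=
      div_pos (mul_pos (by linarith) (by linarith)) (by linarith)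
    linarith
  refine ⟨_, s', hr'', hs', htrans _ r' s' hr'' hr' hs' (rel_scale_to hscale hr hs hr' hE) hE', ?_⟩
  rw [← Real.sqrt_mul (div_pos (by linarith) (by linarith)).le]
  congr 1
  field_simp [show s - 1 ≠ 0 by linarith, show s' - 1 ≠ 0 by linarith]
  ring

end

/-- If `E` is an equivalence relation on `(1,∞)` invariant under the amplification scaling
`r ↦ 1 + (r-1)/u²`, then the set of ratios `√((r-1)/(s-1))` for `r E s` is a subgroup
of the multiplicative positive reals. -/
theorem stmt_15 (E : ℝ → ℝ → Prop)
    (hrefl : ∀ r, 1 < r → E r r)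
    (hsymm : ∀ r s, 1 < r → 1 < s → E r s → E s r)
    (htrans : ∀ r s u, 1 < r → 1 < s → 1 < u → E r s → E s u → E r u)
    (hscale : ∀ r s, 1 < r → 1 < s → ∀ u : ℝ, 0 < u →
      E r s → E (1 + (r - 1) / u ^ 2) (1 + (s - 1) / u ^ 2)) :
    let G : Set ℝ := {t | ∃ r s : ℝ, 1 < r ∧ 1 < s ∧ E r s ∧ t = Real.sqrt ((r - 1) / (s - 1))}
    G ⊆ Set.Ioi 0 ∧ (1 : ℝ) ∈ G ∧ (∀ x ∈ G, x⁻¹ ∈ G) ∧ (∀ x ∈ G, ∀ y ∈ G, x * y ∈ G) :=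
  ⟨sqrtRatioSet_subset_Ioi, one_mem_sqrtRatioSet hrefl,
    fun _ => inv_mem_sqrtRatioSet hsymm,
    fun _ hx _ hy => mul_mem_sqrtRatioSet htrans hscale hx hy⟩
end

section
/- Let n ≥ 4 be an even natural number and write n = 2ℓ. Suppose that for every natural number k ≥ 3 there exists a natural number m with k·ℓ^m = n + k − 2. Then this leads to a contradiction; i.e., no even n ≥ 4 satisfies this family of equations. -/
theorem Nat.dvd_sub_of_mul_eq_add_sub {k a n c : ℕ} (hc : c ≤ n) (h : k * a = n + k - c) :
    k ∣ n - c := by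
  have hk : k ∣ n - c + k := by
    rw [show n - c + k = n + k - c by omega, ← h]
    exact dvd_mul_right k a
  exact (Nat.dvd_add_left (dvd_refl k)).mp hk

theorem stmt_17_general (n ℓ : ℕ) (h4 : 4 ≤ n)
    (h : ∀ k : ℕ, 3 ≤ k → ∃ m : ℕ, k * ℓ ^ m = n + k - 2) : False := by
  obtain ⟨m, hm⟩ := h n (by omega)
  have hdvd : n ∣ n - 2 := Nat.dvd_sub_of_mul_eq_add_sub (by omega) hm
  have := Nat.le_of_dvd (by omega) hdvd
  omega

/-- No even `n ≥ 4`, written `n = 2ℓ`, can satisfy `k·ℓ^m = n + k - 2` (for some `m`)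
for every `k ≥ 3`. -/
theorem stmt_17 (n ℓ : ℕ) (hn : n = 2 * ℓ) (h4 : 4 ≤ n)
    (h : ∀ k : ℕ, 3 ≤ k → ∃ m : ℕ, k * ℓ ^ m = n + k - 2) : False :=
  stmt_17_general n ℓ h4 h
end
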